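/- In Lorentz–Minkowski space E₁³, a C² regular non-lightlike unit-speed curve α that is not spherical is planar (its image lies in an affine plane) if and only if its normal development (κ₁(s), κ₂(s)) with respect to an RM frame lies on a straight line through the origin, i.e., there exist constants (a, b) ≠ (0,0) with aκ₁(s) + bκ₂(s) = 0 for all s. -/

import Mathlib

/-!
If `α` lies in the plane `⟨x, u⟩₁ = c`, then `t ⊥ u`, so the derivatives `nᵢ' = −εκᵢ t` are
orthogonal to `u` as well and `A = ⟨n₁, u⟩₁`, `B = ⟨n₂, u⟩₁` are constant; differentiating
`⟨t, u⟩₁ = 0` gives `ε₁Aκ₁ + Bκ₂ = 0`, and `(ε₁A, B) ≠ 0` because a vector orthogonal to a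
frame of non-null vectors vanishes. Conversely, if `aκ₁ + bκ₂ = 0` then `a n₁ + b n₂` has
derivative `−ε(aκ₁ + bκ₂) t = 0`, so it is a constant non-zero vector orthogonal to `t = α'`.
-/

/-- The Lorentz–Minkowski inner product of index 1 on `ℝ³`. -/
noncomputable def mdot (x y : Fin 3 → ℝ) : ℝ := x 0 * y 0 + x 1 * y 1 - x 2 * y 2

theorem mdot_comm (x y : Fin 3 → ℝ) : mdot x y = mdot y x := by
  simp only [mdot]; ring

@[simp]
theorem mdot_add_left (x x' y : Fin 3 → ℝ) : mdot (x + x') y = mdot x y + mdot x' y := by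
  simp only [mdot, Pi.add_apply]; ring

@[simp]
theorem mdot_add_right (x y y' : Fin 3 → ℝ) : mdot x (y + y') = mdot x y + mdot x y' := by
  simp only [mdot, Pi.add_apply]; ring

@[simp]
theorem mdot_smul_left (r : ℝ) (x y : Fin 3 → ℝ) : mdot (r • x) y = r * mdot x y := by
  simp only [mdot, Pi.smul_apply, smul_eq_mul]; ring

@[simp]
theorem mdot_smul_right (r : ℝ) (x y : Fin 3 → ℝ) : mdot x (r • y) = r * mdot x y := by
  simp only [mdot, Pi.smul_apply, smul_eq_mul]; ring

@[simp]
theorem mdot_zero_right (x : Fin 3 → ℝ) : mdot x 0 = 0 := by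
  simp [mdot]

theorem eq_zero_of_mdot_eq_zero_of_orthogonal {e₁ e₂ e₃ v : Fin 3 → ℝ}
    (h₁ : mdot e₁ e₁ ≠ 0) (h₂ : mdot e₂ e₂ ≠ 0) (h₃ : mdot e₃ e₃ ≠ 0)
    (h₁₂ : mdot e₁ e₂ = 0) (h₁₃ : mdot e₁ e₃ = 0) (h₂₃ : mdot e₂ e₃ = 0)
    (hv₁ : mdot e₁ v = 0) (hv₂ : mdot e₂ v = 0) (hv₃ : mdot e₃ v = 0) : v = 0 := by
  -- `A *ᵥ w = (mdot eᵢ w)ᵢ` and the columns of `B` are the `eᵢ`, so `A * B` is the Gram matrix.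
  set A : Matrix (Fin 3) (Fin 3) ℝ :=
    !![e₁ 0, e₁ 1, -e₁ 2; e₂ 0, e₂ 1, -e₂ 2; e₃ 0, e₃ 1, -e₃ 2]
  set B : Matrix (Fin 3) (Fin 3) ℝ :=
    !![e₁ 0, e₂ 0, e₃ 0; e₁ 1, e₂ 1, e₃ 1; e₁ 2, e₂ 2, e₃ 2]
  have hGram : A * B = Matrix.diagonal ![mdot e₁ e₁, mdot e₂ e₂, mdot e₃ e₃] := by
    simp only [mdot] at *
    ext i j
    fin_cases i <;> fin_cases j <;>
      simp [A, B, Matrix.mul_apply, Fin.sum_univ_three] <;> linarith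
  have hdetA : A.det ≠ 0 := by
    have hdet : A.det * B.det ≠ 0 := by
      rw [← Matrix.det_mul, hGram, Matrix.det_diagonal, Fin.prod_univ_three]
      simp [h₁, h₂, h₃]
    exact left_ne_zero_of_mul hdet
  have hAv : A.mulVec v = 0 := by
    simp only [mdot] at hv₁ hv₂ hv₃
    funext i
    fin_cases i <;> simp [A, Matrix.mulVec, dotProduct, Fin.sum_univ_three] <;> linarith
  exact Matrix.eq_zero_of_mulVec_eq_zero hdetA hAv

theorem HasDerivAt.mdot_const {f : ℝ → Fin 3 → ℝ} {f' : Fin 3 → ℝ} {s : ℝ}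
    (hf : HasDerivAt f f' s) (u : Fin 3 → ℝ) :
    HasDerivAt (fun s => mdot (f s) u) (mdot f' u) s := by
  have hf := hasDerivAt_pi.1 hf
  exact (((hf 0).mul_const (u 0)).add ((hf 1).mul_const (u 1))).sub ((hf 2).mul_const (u 2))

theorem mdot_deriv_eq_zero_of_mdot_eq {f : ℝ → Fin 3 → ℝ} {u : Fin 3 → ℝ} {c : ℝ}
    (hf : Differentiable ℝ f) (h : ∀ s, mdot (f s) u = c) (s : ℝ) :
    mdot (deriv f s) u = 0 := by
  have hderiv := ((hf s).hasDerivAt.mdot_const u).deriv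
  rw [funext h, deriv_const] at hderiv
  exact hderiv.symm

theorem mdot_eq_of_mdot_deriv_eq_zero {f : ℝ → Fin 3 → ℝ} {u : Fin 3 → ℝ}
    (hf : Differentiable ℝ f) (h : ∀ s, mdot (deriv f s) u = 0) (s s' : ℝ) :
    mdot (f s) u = mdot (f s') u :=
  is_const_of_deriv_eq_zero (fun x => ((hf x).hasDerivAt.mdot_const u).differentiableAt)
    (fun x => ((hf x).hasDerivAt.mdot_const u).deriv.trans (h x)) s s'

theorem eq_zero_and_eq_zero_of_smul_add_smul_eq_zero {e₁ e₂ : Fin 3 → ℝ} {a b : ℝ}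
    (h₁ : mdot e₁ e₁ ≠ 0) (h₂ : mdot e₂ e₂ ≠ 0) (h₁₂ : mdot e₁ e₂ = 0)
    (h : a • e₁ + b • e₂ = 0) : a = 0 ∧ b = 0 := by
  have ha := congrArg (mdot e₁) h
  have hb := congrArg (mdot e₂) h
  simp only [mdot_add_right, mdot_smul_right, mdot_zero_right, h₁₂, mdot_comm e₂ e₁] at ha hb
  exact ⟨(mul_eq_zero.1 (by simpa using ha)).resolve_right h₁,
    (mul_eq_zero.1 (by simpa using hb)).resolve_right h₂⟩

section RMFrame

variable {α t n₁ n₂ : ℝ → Fin 3 → ℝ} {κ₁ κ₂ : ℝ → ℝ} {ε ε₁ : ℝ}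

theorem exists_linear_relation_of_planar (hα : Differentiable ℝ α)
    (ht : ∀ s, t s = deriv α s) (ht' : Differentiable ℝ t)
    (hn₁ : Differentiable ℝ n₁) (hn₂ : Differentiable ℝ n₂)
    (hdt : ∀ s, deriv t s = (ε₁ * κ₁ s) • n₁ s + κ₂ s • n₂ s)
    (hdn₁ : ∀ s, deriv n₁ s = -(ε * κ₁ s) • t s)
    (hdn₂ : ∀ s, deriv n₂ s = -(ε * κ₂ s) • t s)
    (htt : mdot (t 0) (t 0) ≠ 0) (hn₁n₁ : mdot (n₁ 0) (n₁ 0) ≠ 0)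
    (hn₂n₂ : mdot (n₂ 0) (n₂ 0) ≠ 0) (htn₁ : mdot (t 0) (n₁ 0) = 0)
    (htn₂ : mdot (t 0) (n₂ 0) = 0) (hn₁n₂ : mdot (n₁ 0) (n₂ 0) = 0) (hε₁ : ε₁ ≠ 0)
    (hplanar : ∃ u : Fin 3 → ℝ, u ≠ 0 ∧ ∃ c : ℝ, ∀ s, mdot (α s) u = c) :
    ∃ a b : ℝ, ¬(a = 0 ∧ b = 0) ∧ ∀ s, a * κ₁ s + b * κ₂ s = 0 := by
  obtain ⟨u, hu, c, hc⟩ := hplanar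
  have htu : ∀ s, mdot (t s) u = 0 := fun s => ht s ▸ mdot_deriv_eq_zero_of_mdot_eq hα hc s
  have hn₁u : ∀ s, mdot (n₁ s) u = mdot (n₁ 0) u :=
    (mdot_eq_of_mdot_deriv_eq_zero hn₁ (fun s => by rw [hdn₁, mdot_smul_left, htu, mul_zero]) · 0)
  have hn₂u : ∀ s, mdot (n₂ s) u = mdot (n₂ 0) u :=
    (mdot_eq_of_mdot_deriv_eq_zero hn₂ (fun s => by rw [hdn₂, mdot_smul_left, htu, mul_zero]) · 0)
  refine ⟨ε₁ * mdot (n₁ 0) u, mdot (n₂ 0) u, fun ⟨h₁, h₂⟩ => hu ?_, fun s => ?_⟩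
  · exact eq_zero_of_mdot_eq_zero_of_orthogonal htt hn₁n₁ hn₂n₂ htn₁ htn₂ hn₁n₂
      (htu 0) ((mul_eq_zero.1 h₁).resolve_left hε₁) h₂
  · have htu' := mdot_deriv_eq_zero_of_mdot_eq ht' htu s
    simp only [hdt, mdot_add_left, mdot_smul_left, hn₁u s, hn₂u s] at htu'
    linear_combination htu'

theorem planar_of_linear_relation (hα : Differentiable ℝ α) (ht : ∀ s, t s = deriv α s)
    (hn₁ : Differentiable ℝ n₁) (hn₂ : Differentiable ℝ n₂)
    (hdn₁ : ∀ s, deriv n₁ s = -(ε * κ₁ s) • t s)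
    (hdn₂ : ∀ s, deriv n₂ s = -(ε * κ₂ s) • t s)
    (htn₁ : ∀ s, mdot (t s) (n₁ s) = 0) (htn₂ : ∀ s, mdot (t s) (n₂ s) = 0)
    (hn₁n₁ : mdot (n₁ 0) (n₁ 0) ≠ 0) (hn₂n₂ : mdot (n₂ 0) (n₂ 0) ≠ 0)
    (hn₁n₂ : mdot (n₁ 0) (n₂ 0) = 0)
    (hline : ∃ a b : ℝ, ¬(a = 0 ∧ b = 0) ∧ ∀ s, a * κ₁ s + b * κ₂ s = 0) :
    ∃ u : Fin 3 → ℝ, u ≠ 0 ∧ ∃ c : ℝ, ∀ s, mdot (α s) u = c := by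
  obtain ⟨a, b, hab, hκ⟩ := hline
  set U : ℝ → Fin 3 → ℝ := fun s => a • n₁ s + b • n₂ s
  have hU' : ∀ s, HasDerivAt U 0 s := fun s => by
    have h := ((hn₁ s).hasDerivAt.const_smul a).add ((hn₂ s).hasDerivAt.const_smul b)
    rwa [hdn₁, hdn₂, smul_smul, smul_smul, ← add_smul,
      show a * -(ε * κ₁ s) + b * -(ε * κ₂ s) = 0 by linear_combination (-ε) * hκ s,
      zero_smul] at h
  have hU : ∀ s, U s = U 0 :=
    (is_const_of_deriv_eq_zero (fun s => (hU' s).differentiableAt) (fun s => (hU' s).deriv) · 0)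
  refine ⟨U 0, fun h => hab (eq_zero_and_eq_zero_of_smul_add_smul_eq_zero hn₁n₁ hn₂n₂ hn₁n₂ h),
    mdot (α 0) (U 0), fun s => ?_⟩
  refine mdot_eq_of_mdot_deriv_eq_zero hα (fun s => ?_) s 0
  rw [← ht, ← hU s]
  simp [U, htn₁, htn₂]

end RMFrame

theorem stmt13_general (α t n₁ n₂ : ℝ → Fin 3 → ℝ) (κ₁ κ₂ : ℝ → ℝ) (ε ε₁ : ℝ)
    (hεε₁ : ε * ε₁ = -1)
    (hα : ContDiff ℝ 2 α)
    (ht : ∀ s, t s = deriv α s)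
    (htt : ∀ s, mdot (t s) (t s) = ε)
    (hn₁n₁ : ∀ s, mdot (n₁ s) (n₁ s) = ε₁)
    (hn₂n₂ : ∀ s, mdot (n₂ s) (n₂ s) = 1)
    (htn₁ : ∀ s, mdot (t s) (n₁ s) = 0)
    (htn₂ : ∀ s, mdot (t s) (n₂ s) = 0)
    (hn₁n₂ : ∀ s, mdot (n₁ s) (n₂ s) = 0)
    (hdiff₁ : Differentiable ℝ n₁) (hdiff₂ : Differentiable ℝ n₂)
    (hdt : ∀ s, deriv t s = (ε₁ * κ₁ s) • n₁ s + κ₂ s • n₂ s)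
    (hdn₁ : ∀ s, deriv n₁ s = -(ε * κ₁ s) • t s)
    (hdn₂ : ∀ s, deriv n₂ s = -(ε * κ₂ s) • t s) :
    (∃ u : Fin 3 → ℝ, u ≠ 0 ∧ ∃ c : ℝ, ∀ s, mdot (α s) u = c) ↔
      ∃ a b : ℝ, ¬(a = 0 ∧ b = 0) ∧ ∀ s, a * κ₁ s + b * κ₂ s = 0 := by
  have hε₀ : ε ≠ 0 := left_ne_zero_of_mul (by rw [hεε₁]; norm_num)
  have hε₁₀ : ε₁ ≠ 0 := right_ne_zero_of_mul (by rw [hεε₁]; norm_num)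
  have hα' : Differentiable ℝ α := hα.differentiable two_ne_zero
  have hn₁₀ : mdot (n₁ 0) (n₁ 0) ≠ 0 := (hn₁n₁ 0).trans_ne hε₁₀
  have hn₂₀ : mdot (n₂ 0) (n₂ 0) ≠ 0 := (hn₂n₂ 0).trans_ne one_ne_zero
  exact ⟨exists_linear_relation_of_planar hα' ht (funext ht ▸ hα.differentiable_deriv_two)
      hdiff₁ hdiff₂ hdt hdn₁ hdn₂ ((htt 0).trans_ne hε₀) hn₁₀ hn₂₀ (htn₁ 0) (htn₂ 0) (hn₁n₂ 0) hε₁₀,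
    planar_of_linear_relation hα' ht hdiff₁ hdiff₂ hdn₁ hdn₂ htn₁ htn₂ hn₁₀ hn₂₀ (hn₁n₂ 0)⟩

/-- In `E₁³`, a `C²` regular non-lightlike unit-speed curve which is not spherical is
planar iff its normal development `(κ₁, κ₂)` with respect to an RM frame lies on a
straight line through the origin. -/
theorem stmt13 (α t n₁ n₂ : ℝ → Fin 3 → ℝ) (κ₁ κ₂ : ℝ → ℝ) (ε ε₁ : ℝ)
    (hε : ε = 1 ∨ ε = -1) (hε₁ : ε₁ = 1 ∨ ε₁ = -1) (hεε₁ : ε * ε₁ = -1)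
    (hα : ContDiff ℝ 2 α)
    (ht : ∀ s, t s = deriv α s)
    (htt : ∀ s, mdot (t s) (t s) = ε)
    (hn₁n₁ : ∀ s, mdot (n₁ s) (n₁ s) = ε₁)
    (hn₂n₂ : ∀ s, mdot (n₂ s) (n₂ s) = 1)
    (htn₁ : ∀ s, mdot (t s) (n₁ s) = 0)
    (htn₂ : ∀ s, mdot (t s) (n₂ s) = 0)
    (hn₁n₂ : ∀ s, mdot (n₁ s) (n₂ s) = 0)
    (hdiff₁ : Differentiable ℝ n₁) (hdiff₂ : Differentiable ℝ n₂)
    (hdt : ∀ s, deriv t s = (ε₁ * κ₁ s) • n₁ s + κ₂ s • n₂ s)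
    (hdn₁ : ∀ s, deriv n₁ s = -(ε * κ₁ s) • t s)
    (hdn₂ : ∀ s, deriv n₂ s = -(ε * κ₂ s) • t s)
    (hnotsph : ∀ p : Fin 3 → ℝ, ¬ ∃ c : ℝ, ∀ s, mdot (α s - p) (α s - p) = c) :
    (∃ u : Fin 3 → ℝ, u ≠ 0 ∧ ∃ c : ℝ, ∀ s, mdot (α s) u = c) ↔
      ∃ a b : ℝ, ¬(a = 0 ∧ b = 0) ∧ ∀ s, a * κ₁ s + b * κ₂ s = 0 :=
  stmt13_general α t n₁ n₂ κ₁ κ₂ ε ε₁ hεε₁ hα ht htt hn₁n₁ hn₂n₂ htn₁ htn₂ hn₁n₂ hdiff₁ hdiff₂ hdt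
    hdn₁ hdn₂
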